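/- arXiv:1312.7679 — 2 statements merged into one kernel-verified Lean document; each statement's English description precedes it below -/
import Mathlib

section
/- For any n ≥ 1, in the braid group B_{n+1} with Artin generators σ₁,…,σₙ, the word σ₁σ₂⋯σₙ · σ₁σ₂⋯σ_{n-1}σₙ⁻¹ · σ₁σ₂⋯σ_{n-1}⁻¹σₙ⁻¹ · ⋯ · σ₁⁻¹σ₂⁻¹⋯σₙ⁻¹ (the toric braid word (σ₁⋯σₙ)^{n+1} with a specified staircase pattern of crossings inverted) represents the identity element of B_{n+1}. -/
/-- The braid relations on n Artin generators σ₁,…,σₙ (indexed by `Fin n` as 0,…,n-1):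
σᵢσⱼ = σⱼσᵢ for |i-j| ≥ 2, and σᵢσᵢ₊₁σᵢ = σᵢ₊₁σᵢσᵢ₊₁. -/
def braidRels (n : ℕ) : Set (FreeGroup (Fin n)) :=
  {r | ∃ i j : Fin n, (i : ℕ) + 2 ≤ (j : ℕ) ∧
      r = FreeGroup.of i * FreeGroup.of j * (FreeGroup.of j * FreeGroup.of i)⁻¹} ∪
  {r | ∃ i j : Fin n, (i : ℕ) + 1 = (j : ℕ) ∧
      r = FreeGroup.of i * FreeGroup.of j * FreeGroup.of i *
        (FreeGroup.of j * FreeGroup.of i * FreeGroup.of j)⁻¹}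

/-- The braid group B_{n+1} on n+1 strands, presented by n generators. -/
def BraidGroup (n : ℕ) : Type := PresentedGroup (braidRels n)

instance (n : ℕ) : Group (BraidGroup n) := by unfold BraidGroup; infer_instance

/-- `braidGen n i` is the generator σ_{i+1} of B_{n+1} if i < n, and 1 otherwise. -/
def braidGen (n : ℕ) (i : ℕ) : BraidGroup n :=
  if h : i < n then PresentedGroup.of (⟨i, h⟩ : Fin n) else 1

/-- The k-th block of the staircase word: σ₁⋯σ_{n-k}·σ_{n-k+1}⁻¹⋯σₙ⁻¹. -/
def staircaseBlock (n k : ℕ) : BraidGroup n :=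
  ((List.range (n - k)).map fun i => braidGen n i).prod *
    ((List.range k).map fun i => (braidGen n (n - k + i))⁻¹).prod

/-!
Write `A_m = σ₁⋯σ_m` and `D_{t,k} = σ_{t+k}⋯σ_{t+1}`, so that block `k` is `A_{n-k} D_{n-k,k}⁻¹`.
The inverted factor of each block commutes with the ascending factors of all later blocks, so the
word equals `(A_n A_{n-1} ⋯ A_1) (D_{0,n} D_{1,n-1} ⋯ D_{n-1,1})⁻¹`. Both products are Garside's
half twist `Δ`: conjugation by `A_{m+1}` shifts `σ_i ↦ σ_{i+1}` for `1 ≤ i ≤ m`, which gives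
`Δ_{m+1} = D_{0,m+1} Δ'_m` with `Δ'_m` the half twist on `σ₂, …, σ_{m+1}`.
-/

section BraidFamily

variable {G : Type*} [Group G]

/-- `a 0, …, a (N - 1)` satisfy the Artin braid relations. -/
structure IsBraidFamily (a : ℕ → G) (N : ℕ) : Prop where
  commute : ∀ i j, i + 2 ≤ j → j < N → Commute (a i) (a j)
  braid : ∀ i, i + 2 ≤ N → a i * a (i + 1) * a i = a (i + 1) * a i * a (i + 1)

def ascProd (a : ℕ → G) (s m : ℕ) : G :=
  ((List.range m).map fun i => a (s + i)).prod

/-- `a (s + m - 1) * ⋯ * a (s + 1) * a s` -/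
def descProd (a : ℕ → G) (s m : ℕ) : G :=
  (ascProd (fun i => (a i)⁻¹) s m)⁻¹

/-- Garside's half twist `ascProd a s m * ascProd a s (m - 1) * ⋯ * ascProd a s 1`. -/
def garside (a : ℕ → G) (s : ℕ) : ℕ → G
  | 0 => 1
  | m + 1 => ascProd a s (m + 1) * garside a s m

variable (a : ℕ → G)

@[simp]
lemma ascProd_zero (s : ℕ) : ascProd a s 0 = 1 := rfl

@[simp]
lemma descProd_zero (s : ℕ) : descProd a s 0 = 1 := by
  simp [descProd]

lemma ascProd_succ (s m : ℕ) : ascProd a s (m + 1) = a s * ascProd a (s + 1) m := by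
  simp only [ascProd, List.prod_range_succ', Nat.succ_eq_add_one, add_zero, add_assoc,
    add_comm 1]

lemma descProd_succ (s m : ℕ) : descProd a s (m + 1) = descProd a (s + 1) m * a s := by
  simp only [descProd, ascProd_succ, mul_inv_rev, inv_inv]

lemma descProd_succ' (s m : ℕ) : descProd a s (m + 1) = a (s + m) * descProd a s m := by
  simp only [descProd, ascProd, List.prod_range_succ, mul_inv_rev, inv_inv]

variable {a}

lemma commute_ascProd_right {x : G} {s m : ℕ} (h : ∀ i, s ≤ i → i < s + m → Commute x (a i)) :
    Commute x (ascProd a s m) :=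
  Commute.list_prod_right _ _ <| by
    simp only [List.mem_map, List.mem_range]
    rintro _ ⟨i, hi, rfl⟩
    exact h _ (by omega) (by omega)

lemma commute_descProd_right {x : G} {s m : ℕ} (h : ∀ i, s ≤ i → i < s + m → Commute x (a i)) :
    Commute x (descProd a s m) :=
  (commute_ascProd_right fun i his him => (h i his him).inv_right).inv_right

lemma commute_ascProd_descProd {N s m t k : ℕ} (ha : IsBraidFamily a N) (hst : s + m + 1 ≤ t)
    (htk : t + k ≤ N) : Commute (ascProd a s m) (descProd a t k) :=
  commute_descProd_right fun j htj hjk =>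
    (commute_ascProd_right fun i _ him => (ha.commute i j (by omega) (by omega)).symm).symm

lemma ascProd_mul_eq_mul_ascProd {N : ℕ} (ha : IsBraidFamily a N) :
    ∀ {m s i : ℕ}, s ≤ i → i + 2 ≤ s + m → s + m ≤ N →
      ascProd a s m * a i = a (i + 1) * ascProd a s m
  | 0, _, _, _, _, _ => by omega
  | m + 1, s, i, hsi, him, hmN => by
    rcases hsi.lt_or_eq with hsi | rfl
    · rw [ascProd_succ, mul_assoc, ascProd_mul_eq_mul_ascProd ha (by omega) (by omega) (by omega),
        ← mul_assoc, ← mul_assoc, (ha.commute s (i + 1) (by omega) (by omega)).eq]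
    · obtain ⟨m, rfl⟩ : ∃ m', m = m' + 1 := ⟨m - 1, by omega⟩
      have hcomm : Commute (a s) (ascProd a (s + 2) m) :=
        commute_ascProd_right fun j hj hjm => ha.commute s j hj (by omega)
      rw [ascProd_succ, ascProd_succ, add_assoc s 1 1]
      calc a s * (a (s + 1) * ascProd a (s + 2) m) * a s
          = a s * a (s + 1) * a s * ascProd a (s + 2) m := by
            rw [mul_assoc, mul_assoc, ← hcomm.eq]; group
        _ = a (s + 1) * (a s * (a (s + 1) * ascProd a (s + 2) m)) := by
            rw [ha.braid s (by omega)]; group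

lemma ascProd_mul_descProd {N s m t : ℕ} (ha : IsBraidFamily a N) (hst : s ≤ t) (hmN : s + m ≤ N) :
    ∀ {k : ℕ}, t + k + 1 ≤ s + m →
      ascProd a s m * descProd a t k = descProd a (t + 1) k * ascProd a s m
  | 0, _ => by simp
  | k + 1, htk => by
    rw [descProd_succ', descProd_succ', ← mul_assoc,
      ascProd_mul_eq_mul_ascProd ha (by omega) (by omega) hmN, mul_assoc,
      ascProd_mul_descProd ha hst hmN (by omega), ← mul_assoc, add_right_comm t 1 k]

lemma garside_succ {N s : ℕ} (ha : IsBraidFamily a N) :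
    ∀ {m : ℕ}, s + m + 1 ≤ N → garside a s (m + 1) = descProd a s (m + 1) * garside a (s + 1) m
  | 0, _ => by simp [garside, ascProd_succ, descProd_succ]
  | m + 1, hmN => by
    rw [garside, garside_succ ha (by omega), ← mul_assoc,
      ascProd_mul_descProd ha le_rfl (by omega) (by omega), ascProd_succ, descProd_succ (s := s),
      garside.eq_2 a (s + 1) m]
    group

lemma list_prod_map_mul_of_commute (x y : ℕ → G) :
    ∀ {m : ℕ}, (∀ i j, i < j → j < m → Commute (x j) (y i)) →
      ((List.range m).map fun k => x k * y k).prod =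
        ((List.range m).map x).prod * ((List.range m).map y).prod
  | 0, _ => by simp
  | m + 1, h => by
    have hcomm : Commute (x m) ((List.range m).map y).prod :=
      Commute.list_prod_right _ _ <| by
        simp only [List.mem_map, List.mem_range]
        rintro _ ⟨i, hi, rfl⟩
        exact h i m hi (by omega)
    rw [List.prod_range_succ, List.prod_range_succ, List.prod_range_succ,
      list_prod_map_mul_of_commute x y fun i j hij hj => h i j hij (by omega), mul_assoc,
      ← mul_assoc _ (x m), ← hcomm.eq]
    group

lemma list_prod_ascProd_eq_garside (s : ℕ) :
    ∀ m : ℕ, ((List.range (m + 1)).map fun k => ascProd a s (m - k)).prod = garside a s m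
  | 0 => by simp [garside]
  | m + 1 => by
    rw [List.prod_range_succ', garside, ← list_prod_ascProd_eq_garside s m]
    simp only [Nat.sub_zero, Nat.succ_eq_add_one, Nat.add_sub_add_right]

lemma list_prod_inv_descProd_eq_inv_garside {N : ℕ} (ha : IsBraidFamily a N) :
    ∀ {m s : ℕ}, s + m ≤ N →
      ((List.range (m + 1)).map fun k => (descProd a (s + m - k) k)⁻¹).prod = (garside a s m)⁻¹
  | 0, _, _ => by simp [garside]
  | m + 1, s, hmN => by
    rw [List.prod_range_succ, garside_succ ha (by omega), mul_inv_rev,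
      ← list_prod_inv_descProd_eq_inv_garside ha (s := s + 1) (by omega)]
    simp only [Nat.add_sub_cancel_right, add_right_comm s 1 m, add_assoc s m 1]

end BraidFamily

lemma braidGen_of_lt {n i : ℕ} (h : i < n) : braidGen n i = PresentedGroup.of ⟨i, h⟩ :=
  dif_pos h

lemma isBraidFamily_braidGen (n : ℕ) : IsBraidFamily (braidGen n) n where
  commute i j hij hj := by
    rw [braidGen_of_lt hj, braidGen_of_lt (by omega)]
    simp only [PresentedGroup.of, Commute, SemiconjBy]
    exact PresentedGroup.mk_eq_mk_of_mul_inv_mem (Or.inl ⟨_, _, hij, rfl⟩)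
  braid i hi := by
    rw [braidGen_of_lt (by omega : i < n), braidGen_of_lt (by omega : i + 1 < n)]
    simp only [PresentedGroup.of]
    exact PresentedGroup.mk_eq_mk_of_mul_inv_mem (Or.inr ⟨_, _, rfl, rfl⟩)

lemma staircaseBlock_eq (n k : ℕ) :
    staircaseBlock n k = ascProd (braidGen n) 0 (n - k) * (descProd (braidGen n) (n - k) k)⁻¹ := by
  simp only [staircaseBlock, ascProd, descProd, inv_inv, zero_add]

theorem staircase_toric_braid_trivial_general (n : ℕ) :
    ((List.range (n + 1)).map fun k => staircaseBlock n k).prod = 1 := by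
  have ha := isBraidFamily_braidGen n
  have hcomm (i j : ℕ) (hij : i < j) (hj : j < n + 1) :
      Commute (ascProd (braidGen n) 0 (n - j)) (descProd (braidGen n) (n - i) i)⁻¹ :=
    (commute_ascProd_descProd ha (by omega) (by omega)).inv_right
  have hdesc := list_prod_inv_descProd_eq_inv_garside ha (s := 0) (m := n) (by omega)
  rw [zero_add] at hdesc
  simp only [staircaseBlock_eq]
  rw [list_prod_map_mul_of_commute _ _ hcomm, list_prod_ascProd_eq_garside, hdesc, mul_inv_cancel]

/-- the word (σ₁⋯σₙ)^{n+1} with the staircase pattern of crossings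
inverted, i.e. the product of the blocks σ₁⋯σ_{n-k}·σ_{n-k+1}⁻¹⋯σₙ⁻¹ for
k = 0,…,n, is trivial in B_{n+1}. -/
theorem staircase_toric_braid_trivial (n : ℕ) (hn : 1 ≤ n) :
    ((List.range (n + 1)).map fun k => staircaseBlock n k).prod = 1 :=
  staircase_toric_braid_trivial_general n
end

section
/- In the braid group B_p (p ≥ 3), for 1 ≤ a < p the braid word σ_a σ_{a+1}⋯σ_{p-1} · σ_{a-1}σ_a⋯σ_{p-2} · ⋯ · σ₁σ₂⋯σ_{p-a} is conjugate, after Markov destabilizations removing the last a strands, to the toric braid (σ₁σ₂⋯σ_{p-a-1})^a in B_{p-a}; in particular, as braid words one has the identity that σ_aσ_{a+1}⋯σ_{p-1}·σ_{a-1}σ_a⋯σ_{p-2}·⋯·σ₁σ₂⋯σ_{p-a} maps to (σ₁⋯σ_{p-a-1})^a under the closure operation (their closures are isotopic links). -/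
/-- A single Markov move (or braid-relation move) on braid words, viewed as
elements of free groups on `n` generators (i.e. words in B_{n+1}):
multiplying by an element of the normal closure of the braid relations
(equality in the braid group), conjugation, and positive/negative
(de)stabilization. Closures of braids related by these moves are isotopic links
(Markov's theorem). -/
inductive MarkovStep : (Σ n : ℕ, FreeGroup (Fin n)) → (Σ n : ℕ, FreeGroup (Fin n)) → Prop
  | braid_rel (n : ℕ) (w r : FreeGroup (Fin n))
      (hr : r ∈ Subgroup.normalClosure (braidRels n)) :
      MarkovStep ⟨n, w⟩ ⟨n, w * r⟩
  | conj (n : ℕ) (w v : FreeGroup (Fin n)) :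
      MarkovStep ⟨n, w⟩ ⟨n, v * w * v⁻¹⟩
  | stab_pos (n : ℕ) (w : FreeGroup (Fin n)) :
      MarkovStep ⟨n, w⟩ ⟨n + 1, FreeGroup.map Fin.castSucc w * FreeGroup.of (Fin.last n)⟩
  | stab_neg (n : ℕ) (w : FreeGroup (Fin n)) :
      MarkovStep ⟨n, w⟩ ⟨n + 1, FreeGroup.map Fin.castSucc w * (FreeGroup.of (Fin.last n))⁻¹⟩

/-- Markov equivalence of braid words: braids with isotopic closures. -/
def MarkovEquiv : (Σ n : ℕ, FreeGroup (Fin n)) → (Σ n : ℕ, FreeGroup (Fin n)) → Prop :=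
  Relation.EqvGen MarkovStep

/-- The free-group generator σ_{i+1} (1-based σ-index i+1), or 1 if out of range. -/
def freeGen (n : ℕ) (i : ℕ) : FreeGroup (Fin n) :=
  if h : i < n then FreeGroup.of (⟨i, h⟩ : Fin n) else 1

section BraidWords

variable {G H : Type*} [Monoid G] [Monoid H]

def ascendingProd (g : ℕ → G) (s len : ℕ) : G :=
  ((List.range len).map fun i => g (s + i)).prod

/-- The runs start at `a - 1, a - 2, …, 0`. -/
def staircaseProd (g : ℕ → G) (b a : ℕ) : G :=
  ((List.range a).map fun l => ascendingProd g (a - 1 - l) b).prod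

theorem ascendingProd_add (g : ℕ → G) (s k l : ℕ) :
    ascendingProd g s (k + l) = ascendingProd g s k * ascendingProd g (s + k) l := by
  simp [ascendingProd, List.range_add, Function.comp_def, add_assoc]

theorem ascendingProd_succ (g : ℕ → G) (s len : ℕ) :
    ascendingProd g s (len + 1) = ascendingProd g s len * g (s + len) :=
  List.prod_range_succ _ _

theorem staircaseProd_succ (g : ℕ → G) (b a : ℕ) :
    staircaseProd g b (a + 1) = ascendingProd g a b * staircaseProd g b a := by
  simp only [staircaseProd, List.range_succ_eq_map, List.map_cons, List.prod_cons, List.map_map,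
    Function.comp_def, Nat.add_sub_cancel, Nat.sub_zero, Nat.succ_eq_add_one]
  congr 3 with l
  rw [Nat.sub_sub, Nat.add_comm 1 l]

theorem map_ascendingProd (f : G →* H) (g : ℕ → G) (s len : ℕ) :
    f (ascendingProd g s len) = ascendingProd (f ∘ g) s len := by
  simp [ascendingProd, map_list_prod, Function.comp_def]

theorem map_staircaseProd (f : G →* H) (g : ℕ → G) (b a : ℕ) :
    f (staircaseProd g b a) = staircaseProd (f ∘ g) b a := by
  simp [staircaseProd, map_list_prod, Function.comp_def, map_ascendingProd]

theorem ascendingProd_congr {g g' : ℕ → G} {k : ℕ} (h : ∀ i < k, g i = g' i) {s len : ℕ}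
    (hk : s + len ≤ k) : ascendingProd g s len = ascendingProd g' s len := by
  unfold ascendingProd
  congr 1
  exact List.map_congr_left fun i hi => h _ (by simp at hi; omega)

theorem staircaseProd_congr {g g' : ℕ → G} {k : ℕ} (h : ∀ i < k, g i = g' i) {b a : ℕ}
    (hk : a + b ≤ k + 1) : staircaseProd g b a = staircaseProd g' b a := by
  unfold staircaseProd
  congr 1
  exact List.map_congr_left fun l hl => ascendingProd_congr h (by simp at hl; omega)

theorem SemiconjBy.ascendingProd_right {x : G} {g : ℕ → G} {s len : ℕ}
    (h : ∀ i < len, SemiconjBy x (g (s + i)) (g (s + 1 + i))) :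
    SemiconjBy x (ascendingProd g s len) (ascendingProd g (s + 1) len) := by
  induction len with
  | zero => exact SemiconjBy.one_right x
  | succ len ih =>
    rw [ascendingProd_succ, ascendingProd_succ]
    exact (ih fun i hi => h i (by omega)).mul_right (h len (by omega))

structure SatisfiesBraidRels (n : ℕ) (g : ℕ → G) : Prop where
  commute : ∀ i j, i + 2 ≤ j → j < n → Commute (g i) (g j)
  braid : ∀ i, i + 1 < n → g i * g (i + 1) * g i = g (i + 1) * g i * g (i + 1)

namespace SatisfiesBraidRels

variable {n : ℕ} {g : ℕ → G}

theorem commute_ascendingProd_of_lt (hg : SatisfiesBraidRels n g) {s len j : ℕ}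
    (h : s + len + 1 ≤ j) (hj : j < n) :
    Commute (ascendingProd g s len) (g j) :=
  Commute.list_prod_left _ _ <| by
    simp only [List.mem_map, List.mem_range]
    rintro _ ⟨i, hi, rfl⟩
    exact hg.commute _ _ (by omega) hj

theorem commute_ascendingProd_of_gt (hg : SatisfiesBraidRels n g) {s len j : ℕ}
    (h : j + 2 ≤ s) (hn : s + len ≤ n) :
    Commute (ascendingProd g s len) (g j) :=
  Commute.list_prod_left _ _ <| by
    simp only [List.mem_map, List.mem_range]
    rintro _ ⟨i, hi, rfl⟩
    exact (hg.commute _ _ (by omega) (by omega)).symm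

theorem semiconjBy_ascendingProd (hg : SatisfiesBraidRels n g) {s len i : ℕ} (hs : s ≤ i)
    (hi : i + 2 ≤ s + len) (hn : s + len ≤ n) :
    SemiconjBy (ascendingProd g s len) (g i) (g (i + 1)) := by
  obtain ⟨k, rfl⟩ : ∃ k, i = s + k := ⟨i - s, by omega⟩
  obtain ⟨r, rfl⟩ : ∃ r, len = k + 2 + r := ⟨len - k - 2, by omega⟩
  have hpair : ascendingProd g (s + k) 2 = g (s + k) * g (s + k + 1) := by
    simp [ascendingProd, List.range_succ]
  rw [ascendingProd_add, ascendingProd_add, hpair]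
  have hbraid : SemiconjBy (g (s + k) * g (s + k + 1)) (g (s + k)) (g (s + k + 1)) := by
    rw [SemiconjBy, hg.braid _ (by omega), mul_assoc]
  have hA : Commute (ascendingProd g s k) (g (s + k + 1)) :=
    hg.commute_ascendingProd_of_lt (by omega) (by omega)
  have hB : Commute (ascendingProd g (s + (k + 2)) r) (g (s + k)) :=
    hg.commute_ascendingProd_of_gt (by omega) (by omega)
  exact SemiconjBy.mul_left (SemiconjBy.mul_left hA hbraid) hB

theorem semiconjBy_ascendingProd_succ (hg : SatisfiesBraidRels n g) {s len : ℕ}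
    (hn : s + len + 1 ≤ n) :
    SemiconjBy (ascendingProd g s (len + 1)) (ascendingProd g s len)
      (ascendingProd g (s + 1) len) :=
  SemiconjBy.ascendingProd_right fun i hi => by
    rw [Nat.add_right_comm s 1 i]
    exact hg.semiconjBy_ascendingProd (by omega) (by omega) hn

theorem semiconjBy_staircaseProd (hg : SatisfiesBraidRels n g) {m a : ℕ}
    (hn : a + m ≤ n) :
    SemiconjBy (staircaseProd g (m + 1) a) (ascendingProd g 0 m) (ascendingProd g a m) := by
  induction a with
  | zero => exact SemiconjBy.one_left _
  | succ a ih =>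
    rw [staircaseProd_succ]
    exact (hg.semiconjBy_ascendingProd_succ (by omega)).mul_left (ih (by omega))

end SatisfiesBraidRels

end BraidWords

theorem satisfiesBraidRels_mk_freeGen (n : ℕ) :
    SatisfiesBraidRels n (PresentedGroup.mk (braidRels n) ∘ freeGen n) where
  commute i j hij hj := by
    have hi : i < n := by omega
    simp only [Commute, SemiconjBy, Function.comp_apply, freeGen, dif_pos hi, dif_pos hj,
      ← map_mul]
    exact PresentedGroup.mk_eq_mk_of_mul_inv_mem (Or.inl ⟨⟨i, hi⟩, ⟨j, hj⟩, hij, rfl⟩)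
  braid i hi := by
    simp only [Function.comp_apply, freeGen, dif_pos hi, dif_pos (by omega : i < n), ← map_mul]
    exact PresentedGroup.mk_eq_mk_of_mul_inv_mem (Or.inr ⟨⟨i, _⟩, ⟨i + 1, hi⟩, rfl, rfl⟩)

theorem freeGroup_map_castSucc_freeGen {n i : ℕ} (hi : i < n) :
    FreeGroup.map Fin.castSucc (freeGen n i) = freeGen (n + 1) i := by
  simp [freeGen, hi, Nat.lt_succ_of_lt hi]

local infix:50 " ≈ₘ " => MarkovEquiv

namespace MarkovEquiv

theorem refl (x : Σ n : ℕ, FreeGroup (Fin n)) : x ≈ₘ x := Relation.EqvGen.refl x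

theorem trans {x y z : Σ n : ℕ, FreeGroup (Fin n)} :
    x ≈ₘ y → y ≈ₘ z → x ≈ₘ z := Relation.EqvGen.trans x y z

instance : Trans MarkovEquiv MarkovEquiv MarkovEquiv := ⟨trans⟩

theorem of_step {x y : Σ n : ℕ, FreeGroup (Fin n)} (h : MarkovStep x y) : x ≈ₘ y :=
  Relation.EqvGen.rel x y h

theorem of_mk_eq {n : ℕ} {w w' : FreeGroup (Fin n)}
    (h : PresentedGroup.mk (braidRels n) w = PresentedGroup.mk (braidRels n) w') :
    ⟨n, w⟩ ≈ₘ ⟨n, w'⟩ := by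
  have hr : w⁻¹ * w' ∈ Subgroup.normalClosure (braidRels n) := QuotientGroup.eq.mp h
  simpa using of_step (MarkovStep.braid_rel n w _ hr)

theorem mul_comm {n : ℕ} (x y : FreeGroup (Fin n)) : ⟨n, x * y⟩ ≈ₘ ⟨n, y * x⟩ := by
  simpa [mul_assoc] using of_step (MarkovStep.conj n (x * y) y)

theorem destabilize {n : ℕ} (u : FreeGroup (Fin n)) :
    ⟨n + 1, FreeGroup.map Fin.castSucc u * FreeGroup.of (Fin.last n)⟩ ≈ₘ ⟨n, u⟩ :=
  Relation.EqvGen.symm _ _ (of_step (MarkovStep.stab_pos n u))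

end MarkovEquiv

theorem freeGroup_map_castSucc_staircaseProd_mul {m a c : ℕ} :
    FreeGroup.map Fin.castSucc (staircaseProd (freeGen (m + a)) (m + 1) a *
        ascendingProd (freeGen (m + a)) 0 m ^ c * ascendingProd (freeGen (m + a)) a m) =
      staircaseProd (freeGen (m + a + 1)) (m + 1) a *
        ascendingProd (freeGen (m + a + 1)) 0 m ^ c * ascendingProd (freeGen (m + a + 1)) a m := by
  have h : ∀ i < m + a, (FreeGroup.map Fin.castSucc ∘ freeGen (m + a)) i = freeGen (m + a + 1) i :=
    fun i hi => freeGroup_map_castSucc_freeGen hi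
  simp only [map_mul, map_pow, map_staircaseProd, map_ascendingProd]
  rw [staircaseProd_congr h (by omega), ascendingProd_congr h (by omega),
    ascendingProd_congr h (by omega)]

theorem markovEquiv_staircaseProd_mul_pow (m a c : ℕ) :
    ⟨m + a, staircaseProd (freeGen (m + a)) (m + 1) a * ascendingProd (freeGen (m + a)) 0 m ^ c⟩ ≈ₘ
      ⟨m, ascendingProd (freeGen m) 0 m ^ (a + c)⟩ := by
  induction a generalizing c with
  | zero => simpa [staircaseProd] using MarkovEquiv.refl _
  | succ a ih =>
    set g := freeGen (m + a)
    set g' := freeGen (m + a + 1)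
    have hlast : g' (m + a) = FreeGroup.of (Fin.last (m + a)) := by simp [g', freeGen]; rfl
    calc (⟨m + (a + 1), staircaseProd g' (m + 1) (a + 1) * ascendingProd g' 0 m ^ c⟩ :
          Σ n : ℕ, FreeGroup (Fin n))
      _ = ⟨m + a + 1, ascendingProd g' a m * g' (m + a) *
          (staircaseProd g' (m + 1) a * ascendingProd g' 0 m ^ c)⟩ := by
          rw [staircaseProd_succ, ascendingProd_succ, mul_assoc, add_comm a m]; rfl
      _ ≈ₘ ⟨m + a + 1, staircaseProd g' (m + 1) a * ascendingProd g' 0 m ^ c *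
          (ascendingProd g' a m * g' (m + a))⟩ := MarkovEquiv.mul_comm _ _
      _ = ⟨m + a + 1, FreeGroup.map Fin.castSucc (staircaseProd g (m + 1) a *
          ascendingProd g 0 m ^ c * ascendingProd g a m) * FreeGroup.of (Fin.last (m + a))⟩ := by
          rw [← mul_assoc, freeGroup_map_castSucc_staircaseProd_mul, hlast]
      _ ≈ₘ ⟨m + a, staircaseProd g (m + 1) a * ascendingProd g 0 m ^ c * ascendingProd g a m⟩ :=
          MarkovEquiv.destabilize _
      _ ≈ₘ ⟨m + a, ascendingProd g a m * (staircaseProd g (m + 1) a * ascendingProd g 0 m ^ c)⟩ :=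
          MarkovEquiv.mul_comm _ _
      _ ≈ₘ ⟨m + a, staircaseProd g (m + 1) a * ascendingProd g 0 m ^ (c + 1)⟩ := by
          refine MarkovEquiv.of_mk_eq ?_
          have h := ((satisfiesBraidRels_mk_freeGen (m + a)).semiconjBy_staircaseProd
            (m := m) (a := a) (by omega)).eq
          simp only [map_mul, map_pow, map_ascendingProd, map_staircaseProd]
          rw [← mul_assoc, ← h, mul_assoc, pow_succ']
      _ ≈ₘ ⟨m, ascendingProd (freeGen m) 0 m ^ (a + 1 + c)⟩ := by
          simpa only [add_assoc, add_comm 1 c] using ih (c + 1)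

theorem final_block_is_toric_general (p a : ℕ) (ha2 : a < p) :
    MarkovEquiv
      ⟨p - 1, ((List.range a).map fun l =>
          ((List.range (p - a)).map fun i => freeGen (p - 1) (a - 1 - l + i)).prod).prod⟩
      ⟨p - a - 1, (((List.range (p - a - 1)).map fun i => freeGen (p - a - 1) i).prod) ^ a⟩ := by
  obtain ⟨m, rfl⟩ : ∃ m, p = m + a + 1 := ⟨p - a - 1, by omega⟩
  rw [show m + a + 1 - 1 = m + a by omega, show m + a + 1 - a - 1 = m by omega,
    show m + a + 1 - a = m + 1 by omega]
  simpa [staircaseProd, ascendingProd] using markovEquiv_staircaseProd_mul_pow m a 0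

/-- in B_p (p ≥ 3, braid words on p-1 generators), for 1 ≤ a < p
the word σ_a⋯σ_{p-1} · σ_{a-1}⋯σ_{p-2} · ⋯ · σ₁⋯σ_{p-a} has closure isotopic to
the closure of the toric braid (σ₁⋯σ_{p-a-1})^a in B_{p-a}: the two words are
Markov equivalent. -/
theorem final_block_is_toric (p a : ℕ) (hp : 3 ≤ p) (ha1 : 1 ≤ a) (ha2 : a < p) :
    MarkovEquiv
      ⟨p - 1, ((List.range a).map fun l =>
          ((List.range (p - a)).map fun i => freeGen (p - 1) (a - 1 - l + i)).prod).prod⟩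
      ⟨p - a - 1, (((List.range (p - a - 1)).map fun i => freeGen (p - a - 1) i).prod) ^ a⟩ :=
  final_block_is_toric_general p a ha2
end
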